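/- Let Ω be a vaguely closed, translation-invariant, ‖·‖_unif-bounded set of local measures such that the ℝ-action α on Ω is minimal, and suppose some ω ∈ Ω is eventually periodic (i.e., periodic with period p on [t₀, ∞) for some t₀); then every element of Ω is periodic with period p. -/

import Mathlib

open MeasureTheory Filter Topology Set

/-- A (signed) local measure on `ℝ`, given by its Jordan decomposition:
two mutually singular nonnegative Borel measures. -/
structure LocalMeasure where
  pos : Measure ℝ
  neg : Measure ℝ
  mutuallySingular : pos ⟂ₘ neg

namespace LocalMeasure

/-- The total variation `|μ|`. -/
noncomputable def tv (μ : LocalMeasure) : Measure ℝ := μ.pos + μ.neg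

/-- Integration against the signed local measure. -/
noncomputable def integral (μ : LocalMeasure) (f : ℝ → ℝ) : ℝ :=
  (∫ x, f x ∂μ.pos) - ∫ x, f x ∂μ.neg

/-- Integration of a complex-valued function against the signed local measure. -/
noncomputable def cintegral (μ : LocalMeasure) (f : ℝ → ℂ) : ℂ :=
  (∫ x, f x ∂μ.pos) - ∫ x, f x ∂μ.neg

/-- `‖μ‖_unif = sup_t |μ|((t,t+1])`. -/
noncomputable def munif (μ : LocalMeasure) : ENNReal := ⨆ t : ℝ, μ.tv (Set.Ioc t (t + 1))

/-- `μ` is uniformly locally bounded by `C`. -/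
def UnifBounded (μ : LocalMeasure) (C : ℝ) : Prop :=
  ∀ t : ℝ, μ.tv (Set.Ioc t (t + 1)) ≤ ENNReal.ofReal C

/-- The translate `ω(· + t)`, i.e. `B ↦ ω(B + t)`. -/
noncomputable def translate (μ : LocalMeasure) (t : ℝ) : LocalMeasure where
  pos := Measure.map (fun x => x - t) μ.pos
  neg := Measure.map (fun x => x - t) μ.neg
  mutuallySingular := by
    obtain ⟨s, hs, h1, h2⟩ := μ.mutuallySingular
    refine ⟨(fun y => y + t) ⁻¹' s, hs.preimage (measurable_add_const t), ?_, ?_⟩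
    · rw [Measure.map_apply (measurable_sub_const t) (hs.preimage (measurable_add_const t))]
      convert h1 using 2
      ext x; simp
    · rw [← Set.preimage_compl,
        Measure.map_apply (measurable_sub_const t) (hs.compl.preimage (measurable_add_const t))]
      convert h2 using 2
      ext x; simp

/-- The real value `μ(B)` of the signed local measure on a Borel set `B`. -/
noncomputable def val (μ : LocalMeasure) (B : Set ℝ) : ℝ :=
  (μ.pos B).toReal - (μ.neg B).toReal

/-- Vague convergence of a sequence of local measures. -/
def VagueTendsto (g : ℕ → LocalMeasure) (μ : LocalMeasure) : Prop :=
  ∀ f : ℝ → ℝ, Continuous f → HasCompactSupport f →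
    Tendsto (fun n => (g n).integral f) atTop (𝓝 (μ.integral f))

/-- The vague topology `σ(C_c(ℝ)', C_c(ℝ))` on local measures. -/
noncomputable def vagueTopology : TopologicalSpace LocalMeasure :=
  TopologicalSpace.induced
    (fun μ => fun f : {f : ℝ → ℝ // Continuous f ∧ HasCompactSupport f} => μ.integral f.1)
    inferInstance

end LocalMeasure

/-- Membership in the Sobolev space `W^1_2(ℝ)` (continuous representative `u`
with weak derivative `u'`). -/
def MemW12 (u u' : ℝ → ℝ) : Prop :=
  MemLp u 2 (volume : Measure ℝ) ∧ MemLp u' 2 (volume : Measure ℝ) ∧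
    ∀ x y : ℝ, u y - u x = ∫ t in x..y, u' t

noncomputable instance : TopologicalSpace LocalMeasure := LocalMeasure.vagueTopology

-- cancellation lemma
lemma cancel_aux {μ₁ ν₁ μ₂ ν₂ : Measure ℝ} (h1 : μ₁ ⟂ₘ ν₁) (h2 : μ₂ ⟂ₘ ν₂)
    (heq : μ₁ + ν₂ = μ₂ + ν₁) : μ₁ = μ₂ := by
  obtain ⟨s, hs, hs1, hs2⟩ := h1
  obtain ⟨t, ht, ht1, ht2⟩ := h2
  have key : ∀ X : Set ℝ, μ₁ X + ν₂ X = μ₂ X + ν₁ X := by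
    intro X
    have := congrArg (fun m : Measure ℝ => m X) heq
    simpa using this
  ext B hB
  have hZ : ∀ Z : Set ℝ, Z ⊆ sᶜ → Z ⊆ tᶜ → μ₁ Z = μ₂ Z := by
    intro Z hZs hZt
    have hν₁ : ν₁ Z = 0 := le_antisymm (hs2 ▸ measure_mono hZs) zero_le
    have hν₂ : ν₂ Z = 0 := le_antisymm (ht2 ▸ measure_mono hZt) zero_le
    have := key Z
    rwa [hν₁, hν₂, add_zero, add_zero] at this
  have hY : ∀ Y : Set ℝ, Y ⊆ sᶜ → Y ⊆ t → μ₁ Y = 0 := by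
    intro Y hYs hYt
    have hν₁ : ν₁ Y = 0 := le_antisymm (hs2 ▸ measure_mono hYs) zero_le
    have hμ₂ : μ₂ Y = 0 := le_antisymm (ht1 ▸ measure_mono hYt) zero_le
    have := key Y
    rw [hν₁, hμ₂, zero_add] at this
    simpa using (le_antisymm (le_trans (le_add_right le_rfl) this.le) zero_le)
  have hY' : ∀ Y : Set ℝ, Y ⊆ tᶜ → Y ⊆ s → μ₂ Y = 0 := by
    intro Y hYt hYs
    have hν₂ : ν₂ Y = 0 := le_antisymm (ht2 ▸ measure_mono hYt) zero_le
    have hμ₁ : μ₁ Y = 0 := le_antisymm (hs1 ▸ measure_mono hYs) zero_le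
    have := key Y
    rw [hν₂, hμ₁, zero_add] at this
    simpa using (le_antisymm (le_trans (le_add_right le_rfl) this.ge) zero_le)
  have e1 : μ₁ B = μ₁ (B ∩ sᶜ ∩ tᶜ) := by
    refine le_antisymm ?_ (measure_mono (inter_subset_left.trans inter_subset_left))
    have hsub : B ⊆ (B ∩ sᶜ ∩ tᶜ) ∪ ((B ∩ sᶜ ∩ t) ∪ s) := by
      intro x hx
      by_cases hxs : x ∈ s
      · exact Or.inr (Or.inr hxs)
      · by_cases hxt : x ∈ t
        · exact Or.inr (Or.inl ⟨⟨hx, hxs⟩, hxt⟩)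
        · exact Or.inl ⟨⟨hx, hxs⟩, hxt⟩
    calc μ₁ B ≤ μ₁ ((B ∩ sᶜ ∩ tᶜ) ∪ ((B ∩ sᶜ ∩ t) ∪ s)) := measure_mono hsub
    _ ≤ μ₁ (B ∩ sᶜ ∩ tᶜ) + μ₁ ((B ∩ sᶜ ∩ t) ∪ s) := measure_union_le _ _
    _ ≤ μ₁ (B ∩ sᶜ ∩ tᶜ) + (μ₁ (B ∩ sᶜ ∩ t) + μ₁ s) := by
        gcongr; exact measure_union_le _ _
    _ = μ₁ (B ∩ sᶜ ∩ tᶜ) := by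
        rw [hY _ (inter_subset_left.trans inter_subset_right) inter_subset_right, hs1]; simp
  have e2 : μ₂ B = μ₂ (B ∩ sᶜ ∩ tᶜ) := by
    refine le_antisymm ?_ (measure_mono (inter_subset_left.trans inter_subset_left))
    have hsub : B ⊆ (B ∩ sᶜ ∩ tᶜ) ∪ ((B ∩ tᶜ ∩ s) ∪ t) := by
      intro x hx
      by_cases hxt : x ∈ t
      · exact Or.inr (Or.inr hxt)
      · by_cases hxs : x ∈ s
        · exact Or.inr (Or.inl ⟨⟨hx, hxt⟩, hxs⟩)
        · exact Or.inl ⟨⟨hx, hxs⟩, hxt⟩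
    calc μ₂ B ≤ μ₂ ((B ∩ sᶜ ∩ tᶜ) ∪ ((B ∩ tᶜ ∩ s) ∪ t)) := measure_mono hsub
    _ ≤ μ₂ (B ∩ sᶜ ∩ tᶜ) + μ₂ ((B ∩ tᶜ ∩ s) ∪ t) := measure_union_le _ _
    _ ≤ μ₂ (B ∩ sᶜ ∩ tᶜ) + (μ₂ (B ∩ tᶜ ∩ s) + μ₂ t) := by
        gcongr; exact measure_union_le _ _
    _ = μ₂ (B ∩ sᶜ ∩ tᶜ) := by
        rw [hY' _ (inter_subset_left.trans inter_subset_right) inter_subset_right, ht1]; simp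
  rw [e1, e2]
  exact hZ _ (inter_subset_left.trans inter_subset_right) inter_subset_right

lemma cancel_of_mutuallySingular {μ₁ ν₁ μ₂ ν₂ : Measure ℝ} (h1 : μ₁ ⟂ₘ ν₁) (h2 : μ₂ ⟂ₘ ν₂)
    (heq : μ₁ + ν₂ = μ₂ + ν₁) : μ₁ = μ₂ ∧ ν₁ = ν₂ :=
  ⟨cancel_aux h1 h2 heq, cancel_aux h1.symm h2.symm (by rw [add_comm ν₁ μ₂, ← heq, add_comm])⟩
namespace LocalMeasure

lemma ext' {μ ν : LocalMeasure} (h1 : μ.pos = ν.pos) (h2 : μ.neg = ν.neg) : μ = ν := by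
  cases μ; cases ν; simp_all

@[simp] lemma translate_pos (μ : LocalMeasure) (t : ℝ) :
    (μ.translate t).pos = Measure.map (fun x => x - t) μ.pos := rfl

@[simp] lemma translate_neg (μ : LocalMeasure) (t : ℝ) :
    (μ.translate t).neg = Measure.map (fun x => x - t) μ.neg := rfl

lemma translate_translate (μ : LocalMeasure) (s t : ℝ) :
    (μ.translate s).translate t = μ.translate (s + t) := by
  have hc : ((fun x : ℝ => x - t) ∘ (fun x : ℝ => x - s)) = fun x : ℝ => x - (s + t) := by
    funext x; simp; ring
  refine ext' ?_ ?_ <;>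
    simp only [translate_pos, translate_neg,
      Measure.map_map (measurable_sub_const t) (measurable_sub_const s), hc]

lemma integral_translate (μ : LocalMeasure) (t : ℝ) {f : ℝ → ℝ} (hf : Continuous f) :
    (μ.translate t).integral f = μ.integral (fun x => f (x - t)) := by
  unfold integral
  rw [translate_pos, translate_neg,
    integral_map (measurable_sub_const t).aemeasurable hf.aestronglyMeasurable,
    integral_map (measurable_sub_const t).aemeasurable hf.aestronglyMeasurable]

lemma continuous_eval {f : ℝ → ℝ} (hf : Continuous f) (hfs : HasCompactSupport f) :
    Continuous (fun μ : LocalMeasure => μ.integral f) := by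
  have : (fun μ : LocalMeasure => μ.integral f) =
      (fun v : {f : ℝ → ℝ // Continuous f ∧ HasCompactSupport f} → ℝ => v ⟨f, hf, hfs⟩) ∘
      (fun μ : LocalMeasure =>
        fun g : {f : ℝ → ℝ // Continuous f ∧ HasCompactSupport f} => μ.integral g.1) := rfl
  rw [this]
  exact (continuous_apply _).comp continuous_induced_dom

lemma tendsto_iff_forall {g : ℕ → LocalMeasure} {μ : LocalMeasure} :
    Filter.Tendsto g Filter.atTop (nhds μ) ↔
      ∀ f : ℝ → ℝ, Continuous f → HasCompactSupport f →
        Filter.Tendsto (fun n => (g n).integral f) Filter.atTop (nhds (μ.integral f)) := by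
  constructor
  · intro h f hf hfs
    exact ((continuous_eval hf hfs).tendsto μ).comp h
  · intro h
    have hn : nhds μ = Filter.comap
        (fun μ : LocalMeasure =>
          fun g : {f : ℝ → ℝ // Continuous f ∧ HasCompactSupport f} => μ.integral g.1)
        (nhds (fun g : {f : ℝ → ℝ // Continuous f ∧ HasCompactSupport f} => μ.integral g.1)) :=
      nhds_induced _ μ
    rw [hn, Filter.tendsto_comap_iff]
    rw [tendsto_pi_nhds]
    intro f
    exact h f.1 f.2.1 f.2.2

lemma tv_Ioc_lt (μ : LocalMeasure) {C : ℝ} (h : μ.UnifBounded C) :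
    ∀ n : ℕ, ∀ a : ℝ, μ.tv (Set.Ioc a (a + n)) ≤ n * ENNReal.ofReal C := by
  intro n
  induction n with
  | zero => intro a; simp
  | succ n ih =>
    intro a
    have hsub : Set.Ioc a (a + (n + 1 : ℕ)) ⊆ Set.Ioc a (a + n) ∪ Set.Ioc (a + n) (a + n + 1) := by
      intro x hx
      rcases le_or_gt x (a + n) with hc | hc
      · exact Or.inl ⟨hx.1, hc⟩
      · refine Or.inr ⟨hc, ?_⟩
        have := hx.2; push_cast at this ⊢; linarith
    calc μ.tv (Set.Ioc a (a + (n + 1 : ℕ)))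
        ≤ μ.tv (Set.Ioc a (a + n)) + μ.tv (Set.Ioc (a + n) (a + n + 1)) :=
          le_trans (measure_mono hsub) (measure_union_le _ _)
      _ ≤ n * ENNReal.ofReal C + ENNReal.ofReal C := add_le_add (ih a) (h (a + n))
      _ = (n + 1 : ℕ) * ENNReal.ofReal C := by push_cast; ring

lemma tv_Icc_lt_top (μ : LocalMeasure) {C : ℝ} (h : μ.UnifBounded C) (a b : ℝ) :
    μ.tv (Set.Icc a b) < ⊤ := by
  obtain ⟨n, hn⟩ := exists_nat_ge (b - a + 1)
  have hsub : Set.Icc a b ⊆ Set.Ioc (a - 1) ((a - 1) + n) := by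
    intro x hx
    exact ⟨by linarith [hx.1], by linarith [hx.2]⟩
  calc μ.tv (Set.Icc a b) ≤ μ.tv (Set.Ioc (a - 1) ((a - 1) + n)) := measure_mono hsub
    _ ≤ n * ENNReal.ofReal C := tv_Ioc_lt μ h n (a - 1)
    _ < ⊤ := by
        exact ENNReal.mul_lt_top (by simp) ENNReal.ofReal_lt_top

lemma pos_le_tv (μ : LocalMeasure) : μ.pos ≤ μ.tv := Measure.le_add_right le_rfl
lemma neg_le_tv (μ : LocalMeasure) : μ.neg ≤ μ.tv := Measure.le_add_left le_rfl

lemma fmc_of_le_tv (μ : LocalMeasure) {C : ℝ} (h : μ.UnifBounded C) {ν : Measure ℝ}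
    (hle : ν ≤ μ.tv) : IsFiniteMeasureOnCompacts ν := by
  constructor
  intro K hK
  obtain ⟨r, hr⟩ := hK.isBounded.subset_closedBall 0
  have : K ⊆ Set.Icc (-r) r := by rwa [Real.closedBall_eq_Icc, zero_sub, zero_add] at hr
  calc ν K ≤ ν (Set.Icc (-r) r) := measure_mono this
    _ ≤ μ.tv (Set.Icc (-r) r) := hle _
    _ < ⊤ := tv_Icc_lt_top μ h _ _

lemma fmc_pos (μ : LocalMeasure) {C : ℝ} (h : μ.UnifBounded C) :
    IsFiniteMeasureOnCompacts μ.pos := fmc_of_le_tv μ h (pos_le_tv μ)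

lemma fmc_neg (μ : LocalMeasure) {C : ℝ} (h : μ.UnifBounded C) :
    IsFiniteMeasureOnCompacts μ.neg := fmc_of_le_tv μ h (neg_le_tv μ)

end LocalMeasure
open Filter in
lemma icc_eq_of_cc_integral {ξ η : Measure ℝ}
    (hξ : IsFiniteMeasureOnCompacts ξ) (hη : IsFiniteMeasureOnCompacts η)
    (h : ∀ f : ℝ → ℝ, Continuous f → HasCompactSupport f → ∫ x, f x ∂ξ = ∫ x, f x ∂η)
    (a b : ℝ) (hab : a ≤ b) : ξ (Set.Icc a b) = η (Set.Icc a b) := by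
  haveI := hξ; haveI := hη
  set g : ℕ → ℝ → ℝ := fun n x => max (1 - (n + 1 : ℝ) * Metric.infDist x (Set.Icc a b)) 0 with hg
  have hne : (Set.Icc a b).Nonempty := Set.nonempty_Icc.2 hab
  have hgc : ∀ n, Continuous (g n) :=
    fun n => ((continuous_const.sub (continuous_const.mul
      (Metric.continuous_infDist_pt _))).max continuous_const)
  have hd1 : ∀ (x : ℝ), x ∉ Set.Icc (a - 1) (b + 1) → 1 ≤ Metric.infDist x (Set.Icc a b) := by
    intro x hx
    by_contra h'
    push_neg at h'
    rw [Metric.infDist_lt_iff hne] at h'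
    obtain ⟨y, hy, hdist⟩ := h'
    rw [Real.dist_eq, abs_lt] at hdist
    simp only [Set.mem_Icc, not_and_or, not_le] at hx
    rcases hx with hx | hx
    · have := hy.1; linarith [hdist.1]
    · have := hy.2; linarith [hdist.2]
  have hgs : ∀ n, HasCompactSupport (g n) := by
    intro n
    refine HasCompactSupport.intro (isCompact_Icc (a := a - 1) (b := b + 1)) ?_
    intro x hx
    have := hd1 x hx
    have hn1 : (1 : ℝ) ≤ (n + 1 : ℝ) := by
      have : (0:ℝ) ≤ n := Nat.cast_nonneg n
      linarith
    refine max_eq_right ?_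
    nlinarith [Metric.infDist_nonneg (x := x) (s := Set.Icc a b)]
  have hnonneg : ∀ n x, 0 ≤ g n x := fun n x => le_max_right _ _
  have hmono : ∀ n x, g n x ≤ g 0 x := by
    intro n x
    refine max_le_max ?_ le_rfl
    have h0 := Metric.infDist_nonneg (x := x) (s := Set.Icc a b)
    have hn1 : (0:ℝ) ≤ (n : ℝ) * Metric.infDist x (Set.Icc a b) :=
      mul_nonneg (Nat.cast_nonneg n) h0
    push_cast
    nlinarith
  have hlim : ∀ x, Tendsto (fun n => g n x) atTop
      (nhds (Set.indicator (Set.Icc a b) (fun _ => (1:ℝ)) x)) := by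
    intro x
    by_cases hx : x ∈ Set.Icc a b
    · have : ∀ n, g n x = 1 := by
        intro n
        rw [hg]; simp only []
        rw [Metric.infDist_zero_of_mem hx]
        simp
      rw [Set.indicator_of_mem hx]
      simp only [this]
      exact tendsto_const_nhds
    · have hdpos : 0 < Metric.infDist x (Set.Icc a b) :=
        (isClosed_Icc.notMem_iff_infDist_pos hne).1 hx
      rw [Set.indicator_of_notMem hx]
      obtain ⟨N, hN⟩ := exists_nat_ge (1 / Metric.infDist x (Set.Icc a b))
      refine Tendsto.congr' ?_ (tendsto_const_nhds (x := (0:ℝ)))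
      filter_upwards [eventually_ge_atTop N] with n hn
      have : 1 ≤ (n + 1 : ℝ) * Metric.infDist x (Set.Icc a b) := by
        rw [div_le_iff₀ hdpos] at hN
        have : (N : ℝ) ≤ (n : ℝ) + 1 := by
          have := Nat.cast_le (α := ℝ) |>.2 hn
          linarith
        nlinarith
      rw [hg]; simp only []
      rw [max_eq_right (by linarith)]
  have hint : ∀ (m : Measure ℝ) (_ : IsFiniteMeasureOnCompacts m),
      Tendsto (fun n => ∫ x, g n x ∂m) atTop (nhds ((m (Set.Icc a b)).toReal)) := by
    intro m hm
    haveI := hm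
    have := MeasureTheory.tendsto_integral_of_dominated_convergence (μ := m)
      (F := fun n x => g n x) (f := Set.indicator (Set.Icc a b) (fun _ => (1:ℝ)))
      (bound := g 0)
      (fun n => ((hgc n).aestronglyMeasurable))
      ((hgc 0).integrable_of_hasCompactSupport (hgs 0))
      (fun n => Filter.Eventually.of_forall (fun x => by
        rw [Real.norm_eq_abs, abs_of_nonneg (hnonneg n x)]; exact hmono n x))
      (Filter.Eventually.of_forall hlim)
    rwa [MeasureTheory.integral_indicator_const (1:ℝ) measurableSet_Icc, smul_eq_mul,
      mul_one] at this
  have h1 := hint ξ hξ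
  have h2 := hint η hη
  have heq : ∀ n, ∫ x, g n x ∂ξ = ∫ x, g n x ∂η := fun n => h (g n) (hgc n) (hgs n)
  have := tendsto_nhds_unique (h1.congr (fun n => heq n)) h2
  have hfin1 : ξ (Set.Icc a b) ≠ ⊤ := (isCompact_Icc.measure_lt_top).ne
  have hfin2 : η (Set.Icc a b) ≠ ⊤ := (isCompact_Icc.measure_lt_top).ne
  exact (ENNReal.toReal_eq_toReal_iff' hfin1 hfin2).1 this

lemma ext_of_cc_integral {ξ η : Measure ℝ}
    (hξ : IsFiniteMeasureOnCompacts ξ) (hη : IsFiniteMeasureOnCompacts η)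
    (h : ∀ f : ℝ → ℝ, Continuous f → HasCompactSupport f → ∫ x, f x ∂ξ = ∫ x, f x ∂η) :
    ξ = η := by
  haveI := hξ; haveI := hη
  have hicc := icc_eq_of_cc_integral hξ hη h
  refine Measure.ext_of_Ioc' ξ η (fun a b _ => ?_) (fun a b hab => ?_)
  · exact ((measure_mono Set.Ioc_subset_Icc_self).trans_lt isCompact_Icc.measure_lt_top).ne
  · have hsingl : ∀ (m : Measure ℝ), IsFiniteMeasureOnCompacts m →
        m (Set.Ioc a b) = m (Set.Icc a b) - m {a} := by
      intro m hm
      haveI := hm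
      rw [← Set.Icc_diff_left]
      exact measure_diff (Set.singleton_subset_iff.2 (Set.mem_Icc.2 ⟨le_rfl, hab.le⟩))
        (measurableSet_singleton a).nullMeasurableSet
        (((measure_mono (Set.singleton_subset_iff.2 (Set.mem_Icc.2 ⟨le_rfl, hab.le⟩))).trans_lt
          (isCompact_Icc (a := a) (b := b)).measure_lt_top).ne)
    have hsa : ∀ (m : Measure ℝ), m {a} = m (Set.Icc a a) := by intro m; rw [Set.Icc_self]
    rw [hsingl ξ hξ, hsingl η hη, hicc a b hab.le, hsa ξ, hsa η, hicc a a le_rfl]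
lemma exists_mem_Ioc_int (x : ℝ) : ∃ k : ℤ, x ∈ Set.Ioc (k : ℝ) (k + 1) := by
  refine ⟨⌈x⌉ - 1, ?_, ?_⟩
  · push_cast
    linarith [Int.ceil_lt_add_one x]
  · push_cast
    linarith [Int.le_ceil x]

lemma pairwise_disjoint_Ioc_int :
    Pairwise (Function.onFun Disjoint (fun k : ℤ => Set.Ioc (k : ℝ) (k + 1))) := by
  intro i j hij
  refine Set.disjoint_left.2 fun x hxi hxj => hij ?_
  have h1 : (i : ℝ) < (j : ℝ) + 1 := lt_of_lt_of_le hxi.1 hxj.2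
  have h2 : (j : ℝ) < (i : ℝ) + 1 := lt_of_lt_of_le hxj.1 hxi.2
  have h1' : i < j + 1 := by exact_mod_cast h1
  have h2' : j < i + 1 := by exact_mod_cast h2
  omega

lemma pairwise_disjoint_Ico_nat (t₀ p : ℝ) (hp : 0 < p) :
    Pairwise (Function.onFun Disjoint
      (fun n : ℕ => Set.Ico (t₀ + n * p) (t₀ + n * p + p))) := by
  intro i j hij
  refine Set.disjoint_left.2 fun x hxi hxj => hij ?_
  by_contra hne
  rcases Nat.lt_or_ge i j with hc | hc
  · have : (i : ℝ) + 1 ≤ (j : ℝ) := by exact_mod_cast hc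
    have := hxi.2
    have := hxj.1
    nlinarith
  · have hc' : j < i := lt_of_le_of_ne hc (Ne.symm hne)
    have : (j : ℝ) + 1 ≤ (i : ℝ) := by exact_mod_cast hc'
    have := hxj.2
    have := hxi.1
    nlinarith

lemma Ici_eq_iUnion_Ico (t₀ p : ℝ) (hp : 0 < p) :
    Set.Ici t₀ = ⋃ n : ℕ, Set.Ico (t₀ + n * p) (t₀ + n * p + p) := by
  ext x
  simp only [Set.mem_Ici, Set.mem_iUnion, Set.mem_Ico]
  constructor
  · intro hx
    refine ⟨⌊(x - t₀) / p⌋₊, ?_, ?_⟩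
    · have h1 : (⌊(x - t₀) / p⌋₊ : ℝ) ≤ (x - t₀) / p :=
        Nat.floor_le (div_nonneg (by linarith) hp.le)
      have := (le_div_iff₀ hp).1 h1
      linarith
    · have h2 : (x - t₀) / p < ⌊(x - t₀) / p⌋₊ + 1 := Nat.lt_floor_add_one _
      have := (div_lt_iff₀ hp).1 h2
      linarith
  · rintro ⟨n, hn, -⟩
    have : (0:ℝ) ≤ n * p := by positivity
    linarith

namespace LocalMeasure

/-- Single-step periodicity of `pos` and `neg` on `[t₀, ∞)`. -/
lemma pos_neg_periodic (ω : LocalMeasure) {C t₀ p : ℝ} (hb : ω.UnifBounded C) (hp : 0 < p)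
    (hper : ∀ B : Set ℝ, MeasurableSet B → B ⊆ Set.Ici t₀ →
      ω.val ((fun x => x - p) ⁻¹' B) = ω.val B) :
    (∀ B : Set ℝ, MeasurableSet B → B ⊆ Set.Ici t₀ →
      ω.pos ((fun x => x - p) ⁻¹' B) = ω.pos B) ∧
    (∀ B : Set ℝ, MeasurableSet B → B ⊆ Set.Ici t₀ →
      ω.neg ((fun x => x - p) ⁻¹' B) = ω.neg B) := by
  set P := ω.pos with hP
  set N := ω.neg with hN
  have hPle : ∀ s : Set ℝ, P s ≤ ω.tv s := fun s => Measure.le_iff'.1 (pos_le_tv ω) s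
  have hNle : ∀ s : Set ℝ, N s ≤ ω.tv s := fun s => Measure.le_iff'.1 (neg_le_tv ω) s
  -- C1: bounded sets
  have C1 : ∀ (B : Set ℝ) (a b : ℝ), MeasurableSet B → B ⊆ Set.Ici t₀ → B ⊆ Set.Icc a b →
      P ((fun x => x - p) ⁻¹' B) + N B = P B + N ((fun x => x - p) ⁻¹' B) := by
    intro B a b hB hB0 hBab
    have hSB : (fun x : ℝ => x - p) ⁻¹' B ⊆ Set.Icc (a + p) (b + p) := by
      intro x hx
      have h' := hBab hx
      simp only [Set.mem_Icc] at h'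
      exact ⟨by linarith [h'.1], by linarith [h'.2]⟩
    have f1 : P ((fun x : ℝ => x - p) ⁻¹' B) ≠ ⊤ :=
      (lt_of_le_of_lt (le_trans (measure_mono hSB) (hPle _)) (tv_Icc_lt_top ω hb _ _)).ne
    have f2 : N B ≠ ⊤ :=
      (lt_of_le_of_lt (le_trans (measure_mono hBab) (hNle _)) (tv_Icc_lt_top ω hb _ _)).ne
    have f3 : P B ≠ ⊤ :=
      (lt_of_le_of_lt (le_trans (measure_mono hBab) (hPle _)) (tv_Icc_lt_top ω hb _ _)).ne
    have f4 : N ((fun x : ℝ => x - p) ⁻¹' B) ≠ ⊤ :=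
      (lt_of_le_of_lt (le_trans (measure_mono hSB) (hNle _)) (tv_Icc_lt_top ω hb _ _)).ne
    have hv := hper B hB hB0
    unfold val at hv
    rw [← ENNReal.toReal_eq_toReal_iff' (by simp [f1, f2]) (by simp [f3, f4]),
      ENNReal.toReal_add f1 f2, ENNReal.toReal_add f3 f4]
    rw [← hP, ← hN] at hv
    linarith
  -- the four measures
  set μ₁ : Measure ℝ := Measure.map (fun x => x + p) (P.restrict (Set.Ici t₀)) with hμ₁
  set ν₁ : Measure ℝ := Measure.map (fun x => x + p) (N.restrict (Set.Ici t₀)) with hν₁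
  set μ₂ : Measure ℝ := P.restrict (Set.Ici (t₀ + p)) with hμ₂
  set ν₂ : Measure ℝ := N.restrict (Set.Ici (t₀ + p)) with hν₂
  have happly : ∀ (D : Set ℝ), MeasurableSet D →
      μ₁ D = P ((fun x => x + p) ⁻¹' D ∩ Set.Ici t₀) ∧
      ν₁ D = N ((fun x => x + p) ⁻¹' D ∩ Set.Ici t₀) ∧
      μ₂ D = P (D ∩ Set.Ici (t₀ + p)) ∧ ν₂ D = N (D ∩ Set.Ici (t₀ + p)) := by
    intro D hD
    refine ⟨?_, ?_, ?_, ?_⟩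
    · rw [hμ₁, Measure.map_apply (measurable_add_const p) hD,
        Measure.restrict_apply (hD.preimage (measurable_add_const p))]
    · rw [hν₁, Measure.map_apply (measurable_add_const p) hD,
        Measure.restrict_apply (hD.preimage (measurable_add_const p))]
    · rw [hμ₂, Measure.restrict_apply hD]
    · rw [hν₂, Measure.restrict_apply hD]
  have heq : μ₁ + ν₂ = μ₂ + ν₁ := by
    ext D hD
    have hDcup : D = ⋃ k : ℤ, D ∩ Set.Ioc (k : ℝ) (k + 1) := by
      ext x
      simp only [Set.mem_iUnion, Set.mem_inter_iff]
      constructor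
      · intro hx
        obtain ⟨k, hk⟩ := exists_mem_Ioc_int x
        exact ⟨k, hx, hk⟩
      · rintro ⟨k, hk, -⟩; exact hk
    have hdisj : Pairwise (Function.onFun Disjoint
        (fun k : ℤ => D ∩ Set.Ioc (k : ℝ) (k + 1))) :=
      fun i j hij => (pairwise_disjoint_Ioc_int hij).mono
        Set.inter_subset_right Set.inter_subset_right
    have hmeas : ∀ k : ℤ, MeasurableSet (D ∩ Set.Ioc (k : ℝ) (k + 1)) :=
      fun k => hD.inter measurableSet_Ioc
    have key : ∀ k : ℤ, (μ₁ + ν₂) (D ∩ Set.Ioc (k : ℝ) (k + 1)) =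
        (μ₂ + ν₁) (D ∩ Set.Ioc (k : ℝ) (k + 1)) := by
      intro k
      set Dk := D ∩ Set.Ioc (k : ℝ) (k + 1) with hDk
      have hDkm : MeasurableSet Dk := hmeas k
      obtain ⟨e1, e2, e3, e4⟩ := happly Dk hDkm
      set Bk := (fun x : ℝ => x + p) ⁻¹' Dk ∩ Set.Ici t₀ with hBk
      have hBkm : MeasurableSet Bk :=
        (hDkm.preimage (measurable_add_const p)).inter measurableSet_Ici
      have hBk0 : Bk ⊆ Set.Ici t₀ := Set.inter_subset_right
      have hBkab : Bk ⊆ Set.Icc (k - p) (k + 1 - p) := by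
        rintro x ⟨hx1, -⟩
        have : x + p ∈ Set.Ioc (k : ℝ) (k + 1) := hx1.2
        exact ⟨by linarith [this.1], by linarith [this.2]⟩
      have hset : Dk ∩ Set.Ici (t₀ + p) = (fun x : ℝ => x - p) ⁻¹' Bk := by
        ext x
        simp only [Set.mem_inter_iff, Set.mem_preimage, Set.mem_Ici, hBk, hDk]
        constructor
        · rintro ⟨hx1, hx2⟩
          exact ⟨by simpa [sub_add_cancel] using hx1, by linarith⟩
        · rintro ⟨hx1, hx2⟩
          refine ⟨by simpa [sub_add_cancel] using hx1, by linarith⟩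
      have := C1 Bk (k - p) (k + 1 - p) hBkm hBk0 hBkab
      simp only [Measure.add_apply]
      rw [e1, e2, e3, e4, hset]
      exact this.symm
    calc (μ₁ + ν₂) D = ∑' k : ℤ, (μ₁ + ν₂) (D ∩ Set.Ioc (k : ℝ) (k + 1)) := by
          conv_lhs => rw [hDcup]
          exact measure_iUnion hdisj hmeas
      _ = ∑' k : ℤ, (μ₂ + ν₁) (D ∩ Set.Ioc (k : ℝ) (k + 1)) := tsum_congr key
      _ = (μ₂ + ν₁) D := by
          conv_rhs => rw [hDcup]
          exact (measure_iUnion hdisj hmeas).symm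
  -- mutual singularity
  obtain ⟨u, hu, hu1, hu2⟩ := ω.mutuallySingular
  have hms1 : μ₁ ⟂ₘ ν₁ := by
    refine ⟨(fun x : ℝ => x - p) ⁻¹' u, hu.preimage (measurable_sub_const p), ?_, ?_⟩
    · obtain ⟨e1, -, -, -⟩ := happly _ (hu.preimage (measurable_sub_const p))
      rw [e1]
      have : (fun x : ℝ => x + p) ⁻¹' ((fun x : ℝ => x - p) ⁻¹' u) = u := by
        ext x; simp
      rw [this]
      exact le_antisymm (le_trans (measure_mono Set.inter_subset_left) hu1.le) zero_le
    · obtain ⟨-, e2, -, -⟩ := happly _ (hu.preimage (measurable_sub_const p)).compl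
      rw [e2]
      have : (fun x : ℝ => x + p) ⁻¹' ((fun x : ℝ => x - p) ⁻¹' u)ᶜ = uᶜ := by
        ext x; simp
      rw [this]
      exact le_antisymm (le_trans (measure_mono Set.inter_subset_left) hu2.le) zero_le
  have hms2 : μ₂ ⟂ₘ ν₂ := by
    refine ⟨u, hu, ?_, ?_⟩
    · obtain ⟨-, -, e3, -⟩ := happly u hu
      rw [e3]
      exact le_antisymm (le_trans (measure_mono Set.inter_subset_left) hu1.le) zero_le
    · obtain ⟨-, -, -, e4⟩ := happly uᶜ hu.compl
      rw [e4]
      exact le_antisymm (le_trans (measure_mono Set.inter_subset_left) hu2.le) zero_le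
  obtain ⟨hμeq, hνeq⟩ := cancel_of_mutuallySingular hms1 hms2 heq
  constructor
  · intro B hB hB0
    have hSB : MeasurableSet ((fun x : ℝ => x - p) ⁻¹' B) := hB.preimage (measurable_sub_const p)
    obtain ⟨e1, -, e3, -⟩ := happly _ hSB
    have h1 : (fun x : ℝ => x + p) ⁻¹' ((fun x : ℝ => x - p) ⁻¹' B) ∩ Set.Ici t₀ = B := by
      ext x
      simp only [Set.mem_inter_iff, Set.mem_preimage, Set.mem_Ici, add_sub_cancel_right]
      exact ⟨fun h => h.1, fun h => ⟨h, hB0 h⟩⟩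
    have h2 : (fun x : ℝ => x - p) ⁻¹' B ∩ Set.Ici (t₀ + p) = (fun x : ℝ => x - p) ⁻¹' B := by
      refine Set.inter_eq_left.2 fun x hx => ?_
      have := hB0 hx
      simp only [Set.mem_Ici] at this ⊢
      linarith
    have := congrArg (fun m : Measure ℝ => m ((fun x : ℝ => x - p) ⁻¹' B)) hμeq
    rw [e1, e3, h1, h2] at this
    exact this.symm
  · intro B hB hB0
    have hSB : MeasurableSet ((fun x : ℝ => x - p) ⁻¹' B) := hB.preimage (measurable_sub_const p)
    obtain ⟨-, e2, -, e4⟩ := happly _ hSB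
    have h1 : (fun x : ℝ => x + p) ⁻¹' ((fun x : ℝ => x - p) ⁻¹' B) ∩ Set.Ici t₀ = B := by
      ext x
      simp only [Set.mem_inter_iff, Set.mem_preimage, Set.mem_Ici, add_sub_cancel_right]
      exact ⟨fun h => h.1, fun h => ⟨h, hB0 h⟩⟩
    have h2 : (fun x : ℝ => x - p) ⁻¹' B ∩ Set.Ici (t₀ + p) = (fun x : ℝ => x - p) ⁻¹' B := by
      refine Set.inter_eq_left.2 fun x hx => ?_
      have := hB0 hx
      simp only [Set.mem_Ici] at this ⊢
      linarith
    have := congrArg (fun m : Measure ℝ => m ((fun x : ℝ => x - p) ⁻¹' B)) hνeq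
    rw [e2, e4, h1, h2] at this
    exact this.symm

end LocalMeasure
lemma tsum_int_of_neg_zero {F : ℤ → ENNReal} (h : ∀ k : ℤ, k < 0 → F k = 0) :
    ∑' k : ℤ, F k = ∑' n : ℕ, F n := by
  have hrec : ∑' k : ℤ, F k = (∑' n : ℕ, F n) + ∑' n : ℕ, F (Int.negSucc n) := by
    have := tsum_int_rec (f := fun n : ℕ => F n) (g := fun n : ℕ => F (Int.negSucc n))
      ENNReal.summable ENNReal.summable
    rw [← this]
    exact tsum_congr (fun k => by cases k <;> rfl)
  rw [hrec]
  have h0 : ∑' n : ℕ, F (Int.negSucc n) = 0 := by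
    have : ∀ n : ℕ, F (Int.negSucc n) = 0 := fun n => h _ (Int.negSucc_lt_zero n)
    simp [this]
  rw [h0, add_zero]

lemma int_zero_of_mem_Ico {t₀ p : ℝ} (hp : 0 < p) {m : ℤ} {y : ℝ}
    (hy : y ∈ Set.Ico t₀ (t₀ + p)) (hym : y + m * p ∈ Set.Ico t₀ (t₀ + p)) : m = 0 := by
  by_contra hne
  rcases lt_or_gt_of_ne hne with hc | hc
  · have h1 : (m : ℝ) ≤ -1 := by exact_mod_cast (by omega : m ≤ -1)
    have : (m : ℝ) * p ≤ -p := by nlinarith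
    have := hym.1
    have := hy.2
    linarith
  · have h1 : (1 : ℝ) ≤ (m : ℝ) := by exact_mod_cast hc
    have : p ≤ (m : ℝ) * p := by nlinarith
    have := hym.2
    have := hy.1
    linarith

namespace LocalMeasure

/-- Periodic extension of a measure restricted to `[t₀, t₀+p)`, tiled over `ℝ`. -/
noncomputable def perExt (m : Measure ℝ) (t₀ p : ℝ) : Measure ℝ :=
  Measure.sum (fun k : ℤ =>
    Measure.map (fun x => x + (k : ℝ) * p) (m.restrict (Set.Ico t₀ (t₀ + p))))

lemma perExt_apply (m : Measure ℝ) (t₀ p : ℝ) {B : Set ℝ} (hB : MeasurableSet B) :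
    perExt m t₀ p B =
      ∑' k : ℤ, m ((fun x => x + (k : ℝ) * p) ⁻¹' B ∩ Set.Ico t₀ (t₀ + p)) := by
  rw [perExt, Measure.sum_apply _ hB]
  refine tsum_congr fun k => ?_
  rw [Measure.map_apply (measurable_add_const _) hB,
    Measure.restrict_apply (hB.preimage (measurable_add_const _))]

lemma perExt_map (m : Measure ℝ) (t₀ p : ℝ) :
    Measure.map (fun x => x - p) (perExt m t₀ p) = perExt m t₀ p := by
  ext B hB
  rw [Measure.map_apply (measurable_sub_const p) hB,
    perExt_apply m t₀ p (hB.preimage (measurable_sub_const p)), perExt_apply m t₀ p hB]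
  have hset : ∀ k : ℤ, (fun x : ℝ => x + (k : ℝ) * p) ⁻¹' ((fun x : ℝ => x - p) ⁻¹' B) =
      (fun x : ℝ => x + ((k - 1 : ℤ) : ℝ) * p) ⁻¹' B := by
    intro k
    ext x
    simp only [Set.mem_preimage]
    have : x + (k : ℝ) * p - p = x + ((k - 1 : ℤ) : ℝ) * p := by push_cast; ring
    rw [this]
  calc ∑' k : ℤ, m ((fun x : ℝ => x + (k:ℝ)*p) ⁻¹' ((fun x : ℝ => x - p) ⁻¹' B)
        ∩ Set.Ico t₀ (t₀ + p))
      = ∑' k : ℤ, m ((fun x : ℝ => x + ((k - 1 : ℤ):ℝ)*p) ⁻¹' B ∩ Set.Ico t₀ (t₀ + p)) := by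
        exact tsum_congr fun k => by rw [hset k]
    _ = ∑' k : ℤ, m ((fun x : ℝ => x + ((k : ℤ):ℝ)*p) ⁻¹' B ∩ Set.Ico t₀ (t₀ + p)) := by
        exact (Equiv.subRight (1 : ℤ)).tsum_eq
          (fun j : ℤ => m ((fun x : ℝ => x + (j:ℝ)*p) ⁻¹' B ∩ Set.Ico t₀ (t₀ + p)))
    _ = ∑' k : ℤ, m ((fun x : ℝ => x + (k:ℝ)*p) ⁻¹' B ∩ Set.Ico t₀ (t₀ + p)) := rfl

lemma perExt_restrict (m : Measure ℝ) {t₀ p : ℝ} (hp : 0 < p)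
    (hit : ∀ n : ℕ, ∀ B : Set ℝ, MeasurableSet B → B ⊆ Set.Ici t₀ →
      m ((fun x => x - (n : ℝ) * p) ⁻¹' B) = m B) :
    (perExt m t₀ p).restrict (Set.Ici t₀) = m.restrict (Set.Ici t₀) := by
  ext B hB
  rw [Measure.restrict_apply hB, Measure.restrict_apply hB]
  set E := B ∩ Set.Ici t₀ with hE
  have hEm : MeasurableSet E := hB.inter measurableSet_Ici
  have hE0 : E ⊆ Set.Ici t₀ := Set.inter_subset_right
  rw [perExt_apply m t₀ p hEm]
  set I := Set.Ico t₀ (t₀ + p) with hI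
  -- RHS decomposition
  have hEcup : E = ⋃ n : ℕ, E ∩ Set.Ico (t₀ + n * p) (t₀ + n * p + p) := by
    conv_lhs => rw [← Set.inter_eq_left.2 hE0, Ici_eq_iUnion_Ico t₀ p hp]
    rw [Set.inter_iUnion]
  have hdisj : Pairwise (Function.onFun Disjoint
      (fun n : ℕ => E ∩ Set.Ico (t₀ + n * p) (t₀ + n * p + p))) :=
    fun i j hij => (pairwise_disjoint_Ico_nat t₀ p hp hij).mono
      Set.inter_subset_right Set.inter_subset_right
  have hmeas : ∀ n : ℕ, MeasurableSet (E ∩ Set.Ico (t₀ + n * p) (t₀ + n * p + p)) :=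
    fun n => hEm.inter measurableSet_Ico
  have hrhs : m E = ∑' n : ℕ, m (E ∩ Set.Ico (t₀ + n * p) (t₀ + n * p + p)) := by
    conv_lhs => rw [hEcup]
    exact measure_iUnion hdisj hmeas
  rw [hrhs]
  -- zero for negative k
  have hneg : ∀ k : ℤ, k < 0 →
      m ((fun x : ℝ => x + (k:ℝ)*p) ⁻¹' E ∩ I) = 0 := by
    intro k hk
    have : (fun x : ℝ => x + (k:ℝ)*p) ⁻¹' E ∩ I = ∅ := by
      ext x
      simp only [Set.mem_inter_iff, Set.mem_preimage, Set.mem_empty_iff_false, iff_false,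
        not_and]
      intro hxE hxI
      have h1 : x + (k:ℝ)*p ≥ t₀ := hE0 hxE
      have h2 : x < t₀ + p := hxI.2
      have hk1 : (k : ℝ) ≤ -1 := by exact_mod_cast (by omega : k ≤ -1)
      nlinarith
    rw [this, measure_empty]
  rw [tsum_int_of_neg_zero hneg]
  -- termwise equality over ℕ
  refine tsum_congr fun n => ?_
  set F := (fun x : ℝ => x + ((n:ℤ):ℝ)*p) ⁻¹' E ∩ I with hF
  have hFm : MeasurableSet F := (hEm.preimage (measurable_add_const _)).inter measurableSet_Ico
  have hF0 : F ⊆ Set.Ici t₀ := fun x hx => hx.2.1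
  have hFpre : (fun x : ℝ => x - (n:ℝ)*p) ⁻¹' F = E ∩ Set.Ico (t₀ + n*p) (t₀ + n*p + p) := by
    ext x
    simp only [Set.mem_preimage, Set.mem_inter_iff, hF, hI, Set.mem_Ico, Int.cast_natCast]
    constructor
    · rintro ⟨h1, h2, h3⟩
      rw [sub_add_cancel] at h1
      exact ⟨h1, by linarith, by linarith⟩
    · rintro ⟨h1, h2, h3⟩
      rw [sub_add_cancel]
      exact ⟨h1, by linarith, by linarith⟩
  calc m ((fun x : ℝ => x + ((n:ℤ):ℝ)*p) ⁻¹' E ∩ I)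
      = m F := rfl
    _ = m ((fun x : ℝ => x - (n:ℝ)*p) ⁻¹' F) := (hit n F hFm hF0).symm
    _ = m (E ∩ Set.Ico (t₀ + n*p) (t₀ + n*p + p)) := by rw [hFpre]

lemma perExt_mutuallySingular (ω : LocalMeasure) {t₀ p : ℝ} (hp : 0 < p) :
    perExt ω.pos t₀ p ⟂ₘ perExt ω.neg t₀ p := by
  obtain ⟨u, hu, hu1, hu2⟩ := ω.mutuallySingular
  set I := Set.Ico t₀ (t₀ + p) with hI
  set v := ⋃ k : ℤ, (fun x : ℝ => x + (k:ℝ)*p) ⁻¹' (u ∩ I) with hv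
  have hvm : MeasurableSet v :=
    MeasurableSet.iUnion fun k => (hu.inter measurableSet_Ico).preimage (measurable_add_const _)
  refine ⟨v, hvm, ?_, ?_⟩
  · rw [perExt_apply _ _ _ hvm]
    have : ∀ j : ℤ, ω.pos ((fun x : ℝ => x + (j:ℝ)*p) ⁻¹' v ∩ I) = 0 := by
      intro j
      have hsub : (fun x : ℝ => x + (j:ℝ)*p) ⁻¹' v ∩ I ⊆ u := by
        rintro y ⟨hy1, hy2⟩
        simp only [hv, Set.mem_iUnion, Set.mem_preimage] at hy1
        obtain ⟨k, hk1, hk2⟩ := hy1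
        have harg : y + (j:ℝ)*p + (k:ℝ)*p = y + ((j + k : ℤ):ℝ)*p := by push_cast; ring
        rw [harg] at hk1 hk2
        have hzero : j + k = 0 := int_zero_of_mem_Ico hp hy2 hk2
        rw [hzero] at hk1
        simpa using hk1
      exact le_antisymm (le_trans (measure_mono hsub) hu1.le) zero_le
    simp only [ENNReal.tsum_eq_zero]; exact this
  · rw [perExt_apply _ _ _ hvm.compl]
    have : ∀ j : ℤ, ω.neg ((fun x : ℝ => x + (j:ℝ)*p) ⁻¹' vᶜ ∩ I) = 0 := by
      intro j
      have hsub : ((fun x : ℝ => x + (j:ℝ)*p) ⁻¹' v)ᶜ ∩ I ⊆ uᶜ := by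
        rintro y ⟨hy1, hy2⟩
        simp only [Set.mem_preimage, Set.mem_compl_iff] at hy1 ⊢
        intro hyu
        apply hy1
        simp only [hv, Set.mem_iUnion, Set.mem_preimage]
        refine ⟨-j, ?_⟩
        have harg : y + (j:ℝ)*p + ((-j : ℤ):ℝ)*p = y := by push_cast; ring
        rw [harg]
        exact ⟨hyu, hy2⟩
      exact le_antisymm (le_trans (measure_mono hsub) hu2.le) zero_le
    rw [ENNReal.tsum_eq_zero]
    intro i
    rw [Set.preimage_compl]
    exact this i

/-- The genuinely `p`-periodic element obtained by tiling `ω` on `[t₀, t₀+p)`. -/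
noncomputable def tilde (ω : LocalMeasure) (t₀ : ℝ) {p : ℝ} (hp : 0 < p) : LocalMeasure where
  pos := perExt ω.pos t₀ p
  neg := perExt ω.neg t₀ p
  mutuallySingular := perExt_mutuallySingular ω hp

lemma tilde_translate (ω : LocalMeasure) (t₀ : ℝ) {p : ℝ} (hp : 0 < p) :
    (ω.tilde t₀ hp).translate p = ω.tilde t₀ hp := by
  refine ext' ?_ ?_ <;>
    simp only [translate_pos, translate_neg, tilde, perExt_map]

lemma translate_zero (μ : LocalMeasure) : μ.translate 0 = μ := by
  have : (fun x : ℝ => x - 0) = id := funext fun x => sub_zero x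
  refine ext' ?_ ?_ <;> simp only [translate_pos, translate_neg, this, Measure.map_id]

lemma periodic_iterate (m : Measure ℝ) {t₀ p : ℝ} (hp : 0 < p)
    (hstep : ∀ B : Set ℝ, MeasurableSet B → B ⊆ Set.Ici t₀ →
      m ((fun x => x - p) ⁻¹' B) = m B) :
    ∀ n : ℕ, ∀ B : Set ℝ, MeasurableSet B → B ⊆ Set.Ici t₀ →
      m ((fun x => x - (n : ℝ) * p) ⁻¹' B) = m B := by
  intro n
  induction n with
  | zero =>
    intro B hB hB0
    have : (fun x : ℝ => x - ((0:ℕ):ℝ)*p) ⁻¹' B = B := by ext x; simp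
    rw [this]
  | succ n ih =>
    intro B hB hB0
    set B' := (fun x : ℝ => x - (n:ℝ)*p) ⁻¹' B with hB'
    have hB'm : MeasurableSet B' := hB.preimage (measurable_sub_const _)
    have hB'0 : B' ⊆ Set.Ici t₀ := by
      intro x hx
      have h1 : x - (n:ℝ)*p ∈ Set.Ici t₀ := hB0 hx
      have h2 : (0:ℝ) ≤ (n:ℝ)*p := by positivity
      simp only [Set.mem_Ici] at h1 ⊢
      linarith
    have hcomp : (fun x : ℝ => x - ((n+1:ℕ):ℝ)*p) ⁻¹' B = (fun x : ℝ => x - p) ⁻¹' B' := by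
      ext x
      simp only [Set.mem_preimage, hB']
      have : x - p - (n:ℝ)*p = x - ((n+1:ℕ):ℝ)*p := by push_cast; ring
      rw [this]
    rw [hcomp, hstep B' hB'm hB'0, hB', ih B hB hB0]

end LocalMeasure
lemma fmc_add {m1 m2 : Measure ℝ} (h1 : IsFiniteMeasureOnCompacts m1)
    (h2 : IsFiniteMeasureOnCompacts m2) : IsFiniteMeasureOnCompacts (m1 + m2) :=
  ⟨fun _K hK => by
    rw [Measure.coe_add, Pi.add_apply]
    exact ENNReal.add_lt_top.2 ⟨h1.lt_top_of_isCompact hK, h2.lt_top_of_isCompact hK⟩⟩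

/-- If a bounded, vaguely closed, translation invariant set `Ω` of local measures
is minimal and contains an element `ω` which is eventually periodic (with period
`p` on `[t₀, ∞)`), then every element of `Ω` is periodic with period `p`. -/
theorem all_periodic_of_eventually_periodic (C : ℝ) (Ω : Set LocalMeasure)
    (hbd : ∀ μ ∈ Ω, LocalMeasure.UnifBounded μ C) (hcl : IsClosed Ω)
    (hinv : ∀ ω ∈ Ω, ∀ t : ℝ, ω.translate t ∈ Ω)
    (hmin : ∀ ω ∈ Ω, ∀ ω' ∈ Ω,
      ω' ∈ closure (Set.range fun t : ℝ => ω.translate t))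
    (ω : LocalMeasure) (hω : ω ∈ Ω) (t₀ p : ℝ) (hp : 0 < p)
    (hper : ∀ B : Set ℝ, MeasurableSet B → B ⊆ Set.Ici t₀ →
      ω.val ((fun x => x - p) ⁻¹' B) = ω.val B) :
    ∀ ω' ∈ Ω, ω'.translate p = ω' := by
  intro ω' hω'
  obtain ⟨hpos, hneg⟩ := ω.pos_neg_periodic (hbd ω hω) hp hper
  have hposit := LocalMeasure.periodic_iterate ω.pos hp hpos
  have hnegit := LocalMeasure.periodic_iterate ω.neg hp hneg
  set ωt := ω.tilde t₀ hp with hωt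
  have htp : ωt.translate p = ωt := LocalMeasure.tilde_translate ω t₀ hp
  have htn : ∀ n : ℕ, ωt.translate ((n : ℝ) * p) = ωt := by
    intro n
    induction n with
    | zero => simpa using ωt.translate_zero
    | succ n ih =>
      have harith : ((n + 1 : ℕ) : ℝ) * p = (n : ℝ) * p + p := by push_cast; ring
      rw [harith, ← LocalMeasure.translate_translate, ih, htp]
  have hres_pos : (LocalMeasure.perExt ω.pos t₀ p).restrict (Set.Ici t₀)
      = ω.pos.restrict (Set.Ici t₀) := LocalMeasure.perExt_restrict ω.pos hp hposit
  have hres_neg : (LocalMeasure.perExt ω.neg t₀ p).restrict (Set.Ici t₀)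
      = ω.neg.restrict (Set.Ici t₀) := LocalMeasure.perExt_restrict ω.neg hp hnegit
  have hev : ∀ f : ℝ → ℝ, Continuous f → HasCompactSupport f → ∃ N : ℕ, ∀ n : ℕ, N ≤ n →
      (ω.translate ((n : ℝ) * p)).integral f = ωt.integral f := by
    intro f hf hfs
    obtain ⟨R, hR⟩ := hfs.isCompact.isBounded.subset_closedBall 0
    obtain ⟨N, hN⟩ := exists_nat_ge ((t₀ + R) / p)
    refine ⟨N, fun n hn => ?_⟩
    set s := (n : ℝ) * p with hs
    have hsge : t₀ + R ≤ s := by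
      have h1 : (t₀ + R) / p ≤ (n : ℝ) := le_trans hN (by exact_mod_cast hn)
      have := (div_le_iff₀ hp).1 h1
      linarith
    have hvan : ∀ x : ℝ, x ∉ Set.Ici t₀ → f (x - s) = 0 := by
      intro x hx
      apply image_eq_zero_of_notMem_tsupport
      intro hmem
      have h2 := hR hmem
      rw [Real.closedBall_eq_Icc] at h2
      simp only [Set.mem_Ici, not_le] at hx
      have := h2.1
      linarith
    have key : ∀ m m' : Measure ℝ, m.restrict (Set.Ici t₀) = m'.restrict (Set.Ici t₀) →
        ∫ x, f (x - s) ∂m = ∫ x, f (x - s) ∂m' := by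
      intro m m' hmm
      rw [← setIntegral_eq_integral_of_forall_compl_eq_zero hvan (μ := m),
        ← setIntegral_eq_integral_of_forall_compl_eq_zero hvan (μ := m')]
      show ∫ x, f (x - s) ∂(m.restrict (Set.Ici t₀)) = ∫ x, f (x - s) ∂(m'.restrict (Set.Ici t₀))
      rw [hmm]
    have h1 : (ω.translate s).integral f
        = (∫ x, f (x - s) ∂ω.pos) - ∫ x, f (x - s) ∂ω.neg := by
      unfold LocalMeasure.integral
      rw [LocalMeasure.translate_pos, LocalMeasure.translate_neg,
        integral_map (measurable_sub_const s).aemeasurable hf.aestronglyMeasurable,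
        integral_map (measurable_sub_const s).aemeasurable hf.aestronglyMeasurable]
    have h2 : (ωt.translate s).integral f
        = (∫ x, f (x - s) ∂(LocalMeasure.perExt ω.pos t₀ p))
          - ∫ x, f (x - s) ∂(LocalMeasure.perExt ω.neg t₀ p) := by
      unfold LocalMeasure.integral
      rw [LocalMeasure.translate_pos, LocalMeasure.translate_neg]
      show (∫ x, f x ∂(Measure.map _ (LocalMeasure.perExt ω.pos t₀ p)))
          - (∫ x, f x ∂(Measure.map _ (LocalMeasure.perExt ω.neg t₀ p))) = _
      rw [integral_map (measurable_sub_const s).aemeasurable hf.aestronglyMeasurable,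
        integral_map (measurable_sub_const s).aemeasurable hf.aestronglyMeasurable]
    calc (ω.translate s).integral f
        = (∫ x, f (x - s) ∂ω.pos) - ∫ x, f (x - s) ∂ω.neg := h1
      _ = (∫ x, f (x - s) ∂(LocalMeasure.perExt ω.pos t₀ p))
          - ∫ x, f (x - s) ∂(LocalMeasure.perExt ω.neg t₀ p) := by
          rw [key ω.pos (LocalMeasure.perExt ω.pos t₀ p) hres_pos.symm,
            key ω.neg (LocalMeasure.perExt ω.neg t₀ p) hres_neg.symm]
      _ = (ωt.translate s).integral f := h2.symm
      _ = ωt.integral f := by rw [hs, htn n]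
  have htends : Filter.Tendsto (fun n : ℕ => ω.translate ((n : ℝ) * p))
      Filter.atTop (nhds ωt) := by
    rw [LocalMeasure.tendsto_iff_forall]
    intro f hf hfs
    obtain ⟨N, hN⟩ := hev f hf hfs
    refine Filter.Tendsto.congr' ?_ tendsto_const_nhds
    filter_upwards [Filter.eventually_ge_atTop N] with n hn
    exact (hN n hn).symm
  have hωtΩ : ωt ∈ Ω :=
    hcl.mem_of_tendsto htends (Filter.Eventually.of_forall fun n => hinv ω hω _)
  set T : Set LocalMeasure := {μ | ∀ f : ℝ → ℝ, Continuous f → HasCompactSupport f →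
    (μ.translate p).integral f = μ.integral f} with hT
  have hTc : IsClosed T := by
    have hTeq : T = ⋂ g : {f : ℝ → ℝ // Continuous f ∧ HasCompactSupport f},
        {μ : LocalMeasure | (μ.translate p).integral g.1 = μ.integral g.1} := by
      ext μ
      simp only [hT, Set.mem_setOf_eq, Set.mem_iInter, Subtype.forall]
      constructor
      · intro h f hf; exact h f hf.1 hf.2
      · intro h f hf hfs; exact h f ⟨hf, hfs⟩
    rw [hTeq]
    refine isClosed_iInter fun g => ?_
    have hc1 : Continuous fun μ : LocalMeasure => (μ.translate p).integral g.1 := by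
      have heq2 : (fun μ : LocalMeasure => (μ.translate p).integral g.1)
          = fun μ : LocalMeasure => μ.integral (fun x => g.1 (x - p)) :=
        funext fun μ => LocalMeasure.integral_translate μ p g.2.1
      rw [heq2]
      exact LocalMeasure.continuous_eval (g.2.1.comp (continuous_id.sub continuous_const))
        (g.2.2.comp_homeomorph (Homeomorph.subRight p))
    exact isClosed_eq hc1 (LocalMeasure.continuous_eval g.2.1 g.2.2)
  have horb : (Set.range fun t : ℝ => ωt.translate t) ⊆ T := by
    rintro μ ⟨t, rfl⟩
    intro f hf hfs
    have heq3 : (ωt.translate t).translate p = ωt.translate t := by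
      rw [LocalMeasure.translate_translate, add_comm,
        ← LocalMeasure.translate_translate, htp]
    rw [heq3]
  have hω'T : ω' ∈ T := hTc.closure_subset_iff.2 horb (hmin ωt hωtΩ ω' hω')
  have i1 : IsFiniteMeasureOnCompacts (ω'.translate p).pos :=
    LocalMeasure.fmc_pos _ (hbd _ (hinv ω' hω' p))
  have i2 : IsFiniteMeasureOnCompacts (ω'.translate p).neg :=
    LocalMeasure.fmc_neg _ (hbd _ (hinv ω' hω' p))
  have i3 : IsFiniteMeasureOnCompacts ω'.pos := LocalMeasure.fmc_pos _ (hbd _ hω')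
  have i4 : IsFiniteMeasureOnCompacts ω'.neg := LocalMeasure.fmc_neg _ (hbd _ hω')
  have hmeq : (ω'.translate p).pos + ω'.neg = ω'.pos + (ω'.translate p).neg := by
    refine ext_of_cc_integral (fmc_add i1 i4) (fmc_add i3 i2) ?_
    intro f hf hfs
    have ha : Integrable f (ω'.translate p).pos := by
      haveI := i1; exact hf.integrable_of_hasCompactSupport hfs
    have hb : Integrable f ω'.neg := by
      haveI := i4; exact hf.integrable_of_hasCompactSupport hfs
    have hc : Integrable f ω'.pos := by
      haveI := i3; exact hf.integrable_of_hasCompactSupport hfs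
    have hd : Integrable f (ω'.translate p).neg := by
      haveI := i2; exact hf.integrable_of_hasCompactSupport hfs
    rw [integral_add_measure ha hb, integral_add_measure hc hd]
    have h5 := hω'T f hf hfs
    unfold LocalMeasure.integral at h5
    linarith
  obtain ⟨h6, h7⟩ := cancel_of_mutuallySingular (ω'.translate p).mutuallySingular
    ω'.mutuallySingular hmeq
  exact LocalMeasure.ext' h6 h7

-- #print axioms all_periodic_of_eventually_periodic
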